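/- There exist a positive integer d, a unit vector ψ ∈ ℂ^d ⊗ ℂ^d, for each x ∈ {0,1,2} a projective measurement {P^x_r} on ℂ^d indexed by the triples r ∈ (ℤ/2ℤ)³ with r₀+r₁+r₂ = 0 (each P^x_r a Hermitian projection, P^x_r P^x_{r'} = 0 for r ≠ r', Σ_r P^x_r = I), and for each y ∈ {0,1,2} a projective measurement {Q^y_c} on ℂ^d indexed by the triples c ∈ (ℤ/2ℤ)³ with c₀+c₁+c₂ = 1, such that for every x, y ∈ {0,1,2}: Σ_{(r,c) : r_y = c_x} ⟨ψ, (P^x_r ⊗ Q^y_c)ψ⟩ = 1. In particular the quantum winning probability of the Mermin–Peres magic square game equals 1, strictly exceeding the classical bound 8/9. -/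
import Mathlib


open Matrix
open scoped Kronecker

/-! Auxiliary constructions for the Mermin–Peres magic square. -/

/-- The nine (signed Pauli) observables of the magic square, as integer `4 × 4` matrices.
Row `x`, column `y`.  Rows multiply to `I`, columns to `-I`. -/
def MSA : Fin 3 → Fin 3 → Matrix (Fin 4) (Fin 4) ℤ
  | 0, 0 => !![1,0,0,0;0,-1,0,0;0,0,1,0;0,0,0,-1]      -- I⊗Z
  | 0, 1 => !![1,0,0,0;0,1,0,0;0,0,-1,0;0,0,0,-1]      -- Z⊗I
  | 0, 2 => !![1,0,0,0;0,-1,0,0;0,0,-1,0;0,0,0,1]      -- Z⊗Z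
  | 1, 0 => !![0,0,1,0;0,0,0,1;1,0,0,0;0,1,0,0]        -- X⊗I
  | 1, 1 => !![0,1,0,0;1,0,0,0;0,0,0,1;0,0,1,0]        -- I⊗X
  | 1, 2 => !![0,0,0,1;0,0,1,0;0,1,0,0;1,0,0,0]        -- X⊗X
  | 2, 0 => !![0,0,-1,0;0,0,0,1;-1,0,0,0;0,1,0,0]      -- -X⊗Z
  | 2, 1 => !![0,-1,0,0;-1,0,0,0;0,0,0,1;0,0,1,0]      -- -Z⊗X
  | 2, 2 => !![0,0,0,-1;0,0,1,0;0,1,0,0;-1,0,0,0]      -- Y⊗Y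

/-- Sign of a bit. -/
def MSsign : ZMod 2 → ℤ | 0 => 1 | 1 => -1

/-- `4 ×` the (unnormalized) row projector for row `x` and outcome triple `r`. -/
def MSP (x : Fin 3) (r : Fin 3 → ZMod 2) : Matrix (Fin 4) (Fin 4) ℤ :=
  (1 + MSsign (r 0) • MSA x 0) * (1 + MSsign (r 1) • MSA x 1)

/-- `4 ×` the (unnormalized) column projector for column `y` and outcome triple `c`. -/
def MSQ (y : Fin 3) (c : Fin 3 → ZMod 2) : Matrix (Fin 4) (Fin 4) ℤ :=
  (1 + MSsign (c 0) • MSA 0 y) * (1 + MSsign (c 1) • MSA 1 y)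

/-- The maximally entangled state on `ℂ⁴ ⊗ ℂ⁴`. -/
noncomputable def MSpsi : Fin 4 × Fin 4 → ℂ := fun p => if p.1 = p.2 then 2⁻¹ else 0

lemma MSpsi_norm : star MSpsi ⬝ᵥ MSpsi = 1 := by
  simp [dotProduct, MSpsi, Fintype.sum_prod_type, Finset.sum_ite_eq, apply_ite (star : ℂ → ℂ)]
  norm_num [Fin.sum_univ_four]

lemma MSkey (M N : Matrix (Fin 4) (Fin 4) ℂ) :
    star MSpsi ⬝ᵥ ((M ⊗ₖ N).mulVec MSpsi) = 4⁻¹ * ∑ a, ∑ b, M a b * N a b := by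
  simp only [dotProduct, mulVec, kroneckerMap_apply, Fintype.sum_prod_type, Pi.star_apply, MSpsi,
    apply_ite (star : ℂ → ℂ), star_zero, mul_ite, ite_mul, mul_zero, zero_mul,
    Finset.sum_ite_eq, Finset.sum_ite_eq', Finset.mem_univ, if_true]
  have h2 : star (2:ℂ)⁻¹ = 2⁻¹ := by norm_num
  rw [h2, Finset.mul_sum]
  refine Finset.sum_congr rfl fun a _ => ?_
  rw [Finset.mul_sum, Finset.mul_sum]
  refine Finset.sum_congr rfl fun b _ => ?_
  ring

/-- Casting an integer matrix into `ℂ`. -/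
noncomputable def MSmap (M : Matrix (Fin 4) (Fin 4) ℤ) : Matrix (Fin 4) (Fin 4) ℂ :=
  M.map (Int.cast : ℤ → ℂ)

lemma MSmap_mul (M N : Matrix (Fin 4) (Fin 4) ℤ) : MSmap (M * N) = MSmap M * MSmap N := by
  ext i j
  simp [MSmap, Matrix.mul_apply]

lemma MSmap_ct (M : Matrix (Fin 4) (Fin 4) ℤ) : (MSmap M)ᴴ = MSmap Mᵀ := by
  ext i j
  simp [MSmap, conjTranspose_apply]


lemma MSmap_smul4 (M : Matrix (Fin 4) (Fin 4) ℤ) : MSmap ((4:ℤ) • M) = (4:ℂ) • MSmap M := by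
  ext i j
  simp only [MSmap, Matrix.map_apply, Matrix.smul_apply, smul_eq_mul]
  push_cast
  ring

lemma MSmap_one : MSmap 1 = 1 := by
  ext i j
  simp only [MSmap, Matrix.map_apply, Matrix.one_apply, apply_ite (Int.cast : ℤ → ℂ)]
  norm_num

lemma MSterm (M N : Matrix (Fin 4) (Fin 4) ℤ) :
    star MSpsi ⬝ᵥ ((((4⁻¹:ℂ) • MSmap M) ⊗ₖ ((4⁻¹:ℂ) • MSmap N)).mulVec MSpsi)
      = ((∑ a, ∑ b, M a b * N a b : ℤ) : ℂ) / 64 := by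
  rw [Matrix.smul_kronecker, Matrix.kronecker_smul, smul_smul, smul_mulVec,
    dotProduct_smul, MSkey]
  push_cast
  rw [smul_eq_mul]
  rw [Finset.mul_sum, Finset.mul_sum, Finset.sum_div]
  refine Finset.sum_congr rfl fun a _ => ?_
  rw [Finset.mul_sum, Finset.mul_sum, Finset.sum_div]
  refine Finset.sum_congr rfl fun b _ => ?_
  simp only [MSmap, Matrix.map_apply]
  ring

set_option maxHeartbeats 1000000 in
/-- a perfect quantum strategy for the Mermin–Peres magic square game. -/
theorem magic_square_quantum_strategy :
    ∃ (d : ℕ) (_ : 0 < d) (ψ : Fin d × Fin d → ℂ)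
      (P : Fin 3 → {r : Fin 3 → ZMod 2 // r 0 + r 1 + r 2 = 0} →
        Matrix (Fin d) (Fin d) ℂ)
      (Q : Fin 3 → {c : Fin 3 → ZMod 2 // c 0 + c 1 + c 2 = 1} →
        Matrix (Fin d) (Fin d) ℂ),
      (star ψ ⬝ᵥ ψ = 1) ∧
      (∀ x r, (P x r).IsHermitian) ∧
      (∀ x r, P x r * P x r = P x r) ∧
      (∀ x r r', r ≠ r' → P x r * P x r' = 0) ∧
      (∀ x, ∑ r, P x r = 1) ∧
      (∀ y c, (Q y c).IsHermitian) ∧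
      (∀ y c, Q y c * Q y c = Q y c) ∧
      (∀ y c c', c ≠ c' → Q y c * Q y c' = 0) ∧
      (∀ y, ∑ c, Q y c = 1) ∧
      (∀ x y : Fin 3,
        ∑ r, ∑ c, (if r.val y = c.val x
          then star ψ ⬝ᵥ ((P x r ⊗ₖ Q y c).mulVec ψ) else 0) = 1) := by
  refine ⟨4, by norm_num, MSpsi,
    fun x r => (4⁻¹ : ℂ) • MSmap (MSP x r.val),
    fun y c => (4⁻¹ : ℂ) • MSmap (MSQ y c.val),
    MSpsi_norm, ?_, ?_, ?_, ?_, ?_, ?_, ?_, ?_, ?_⟩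
  · -- P Hermitian
    intro x r
    have h : (MSP x r.val)ᵀ = MSP x r.val := by revert x r; decide
    unfold Matrix.IsHermitian
    rw [Matrix.conjTranspose_smul, MSmap_ct, h]
    norm_num
  · -- P idempotent
    intro x r
    have h : MSP x r.val * MSP x r.val = (4:ℤ) • MSP x r.val := by revert x r; decide
    rw [smul_mul_smul_comm, ← MSmap_mul, h, MSmap_smul4, smul_smul]
    norm_num
  · -- P orthogonal
    intro x r r' hne
    have h : MSP x r.val * MSP x r'.val = 0 := by revert hne; revert x r r'; decide
    rw [smul_mul_smul_comm, ← MSmap_mul, h]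
    ext i j
    simp [MSmap]
  · -- P sums to 1
    intro x
    have h : ∑ r : {r : Fin 3 → ZMod 2 // r 0 + r 1 + r 2 = 0}, MSP x r.val = (4:ℤ) • 1 := by
      revert x; decide
    have h2 : (∑ r : {r : Fin 3 → ZMod 2 // r 0 + r 1 + r 2 = 0}, MSmap (MSP x r.val))
        = MSmap (∑ r : {r : Fin 3 → ZMod 2 // r 0 + r 1 + r 2 = 0}, MSP x r.val) := by
      ext i j
      simp only [MSmap, Matrix.map_apply, Matrix.sum_apply]
      push_cast
      rfl
    rw [← Finset.smul_sum, h2, h, MSmap_smul4, MSmap_one, smul_smul]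
    norm_num
  · -- Q Hermitian
    intro y c
    have h : (MSQ y c.val)ᵀ = MSQ y c.val := by revert y c; decide
    unfold Matrix.IsHermitian
    rw [Matrix.conjTranspose_smul, MSmap_ct, h]
    norm_num
  · -- Q idempotent
    intro y c
    have h : MSQ y c.val * MSQ y c.val = (4:ℤ) • MSQ y c.val := by revert y c; decide
    rw [smul_mul_smul_comm, ← MSmap_mul, h, MSmap_smul4, smul_smul]
    norm_num
  · -- Q orthogonal
    intro y c c' hne
    have h : MSQ y c.val * MSQ y c'.val = 0 := by revert hne; revert y c c'; decide
    rw [smul_mul_smul_comm, ← MSmap_mul, h]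
    ext i j
    simp [MSmap]
  · -- Q sums to 1
    intro y
    have h : ∑ c : {c : Fin 3 → ZMod 2 // c 0 + c 1 + c 2 = 1}, MSQ y c.val = (4:ℤ) • 1 := by
      revert y; decide
    have h2 : (∑ c : {c : Fin 3 → ZMod 2 // c 0 + c 1 + c 2 = 1}, MSmap (MSQ y c.val))
        = MSmap (∑ c : {c : Fin 3 → ZMod 2 // c 0 + c 1 + c 2 = 1}, MSQ y c.val) := by
      ext i j
      simp only [MSmap, Matrix.map_apply, Matrix.sum_apply]
      push_cast
      rfl
    rw [← Finset.smul_sum, h2, h, MSmap_smul4, MSmap_one, smul_smul]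
    norm_num
  · -- perfect correlations
    intro x y
    have hT : ∑ r : {r : Fin 3 → ZMod 2 // r 0 + r 1 + r 2 = 0},
        ∑ c : {c : Fin 3 → ZMod 2 // c 0 + c 1 + c 2 = 1},
          (if r.val y = c.val x
            then ∑ a : Fin 4, ∑ b : Fin 4, MSP x r.val a b * MSQ y c.val a b else 0)
        = 64 := by revert x y; decide
    calc ∑ r : {r : Fin 3 → ZMod 2 // r 0 + r 1 + r 2 = 0}, ∑ c : {c : Fin 3 → ZMod 2 // c 0 + c 1 + c 2 = 1}, (if r.val y = c.val x
          then star MSpsi ⬝ᵥ ((((4⁻¹:ℂ) • MSmap (MSP x r.val)) ⊗ₖ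
            ((4⁻¹:ℂ) • MSmap (MSQ y c.val))).mulVec MSpsi) else 0)
        = ∑ r : {r : Fin 3 → ZMod 2 // r 0 + r 1 + r 2 = 0}, ∑ c : {c : Fin 3 → ZMod 2 // c 0 + c 1 + c 2 = 1}, (if r.val y = c.val x
            then ((∑ a, ∑ b, MSP x r.val a b * MSQ y c.val a b : ℤ) : ℂ) / 64 else 0) := by
          refine Finset.sum_congr rfl fun r _ => Finset.sum_congr rfl fun c _ => ?_
          split
          · exact MSterm _ _
          · rfl
      _ = ((∑ r : {r : Fin 3 → ZMod 2 // r 0 + r 1 + r 2 = 0}, ∑ c : {c : Fin 3 → ZMod 2 // c 0 + c 1 + c 2 = 1}, (if r.val y = c.val x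
            then ∑ a, ∑ b, MSP x r.val a b * MSQ y c.val a b else 0) : ℤ) : ℂ) / 64 := by
          push_cast
          rw [Finset.sum_div]
          refine Finset.sum_congr rfl fun r _ => ?_
          rw [Finset.sum_div]
          refine Finset.sum_congr rfl fun c _ => ?_
          split <;> simp
      _ = 1 := by rw [hT]; norm_num
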